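/- The Gluck re-gluing of the standard decomposition of S^4 again yields a space homeomorphic to S^4: let j₁ : S^2 × S^1 → B^3 × S^1 and j₂ : S^2 × S^1 → S^2 × D^2 be the two boundary inclusions (induced by S^2 = ∂B^3 ⊆ B^3 and S^1 = ∂D^2 ⊆ D^2), and let g : S^2 × S^1 → S^2 × S^1 be the Gluck twist g(x, z) = (R(z)·x, z), where R(z) ∈ SO(3) is the rotation of ℝ^3 by angle arg z about the third coordinate axis. Then the pushout in the category of topological spaces of (j₁ ∘ g, j₂) is homeomorphic to the 4-sphere S^4. -/

import Mathlib

/-!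
The Gluck re-gluing of the standard decomposition
`S⁴ = (B³ × S¹) ∪_{S² × S¹} (S² × D²)`: the pushout of the maps
`j₁ ∘ g : S² × S¹ → B³ × S¹` and `j₂ : S² × S¹ → S² × D²`, where `g` is the
Gluck twist `g(x, z) = (R(z)·x, z)`, is again homeomorphic to the 4-sphere.
-/

open CategoryTheory Limits

/-- The closed unit ball in `ℝ³`. -/
def B3 : Set (EuclideanSpace ℝ (Fin 3)) := Metric.closedBall 0 1

/-- The unit 2-sphere `∂B³` in `ℝ³`. -/
def S2 : Set (EuclideanSpace ℝ (Fin 3)) := Metric.sphere 0 1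

/-- The closed unit disk in `ℂ`. -/
def D2 : Set ℂ := Metric.closedBall 0 1

/-- The unit circle `∂D²` in `ℂ`. -/
def S1 : Set ℂ := Metric.sphere 0 1

/-- The unit 4-sphere in `ℝ⁵`. -/
def S4 : Set (EuclideanSpace ℝ (Fin 5)) := Metric.sphere 0 1

/-- `rot z` is the rotation `R(z)` of `ℝ³` by the angle `arg z` about the third
coordinate axis: it rotates the `(x₀, x₁)`-plane by `arg z` (i.e. acts there as
multiplication by `z = e^{i arg z}`) and fixes the third axis. -/
noncomputable def rot (z : ℂ) (x : EuclideanSpace ℝ (Fin 3)) : EuclideanSpace ℝ (Fin 3) :=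
  (WithLp.equiv 2 (Fin 3 → ℝ)).symm
    ![z.re * x 0 - z.im * x 1, z.im * x 0 + z.re * x 1, x 2]

lemma norm_sq_eq_one_of_mem_S1 {z : ℂ} (hz : z ∈ S1) : z.re ^ 2 + z.im ^ 2 = 1 := by
  have h1 : ‖z‖ = 1 := mem_sphere_zero_iff_norm.mp hz
  have h2 : Complex.normSq z = 1 := by
    rw [Complex.normSq_eq_norm_sq, h1]; norm_num
  rw [Complex.normSq_apply] at h2; nlinarith [h2]

lemma sum_sq_eq_one_of_mem_S2 {x : EuclideanSpace ℝ (Fin 3)} (hx : x ∈ S2) :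
    x 0 ^ 2 + x 1 ^ 2 + x 2 ^ 2 = 1 := by
  have h1 : ‖x‖ = 1 := mem_sphere_zero_iff_norm.mp hx
  rw [EuclideanSpace.norm_eq, Real.sqrt_eq_one] at h1
  simpa [Fin.sum_univ_three, Real.norm_eq_abs, sq_abs] using h1

/-- The rotation `R(z)` preserves the unit sphere. -/
lemma rot_mem_sphere {z : ℂ} (hz : z ∈ S1) {x : EuclideanSpace ℝ (Fin 3)} (hx : x ∈ S2) :
    rot z x ∈ S2 := by
  have hz' := norm_sq_eq_one_of_mem_S1 hz
  have hx' := sum_sq_eq_one_of_mem_S2 hx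
  show rot z x ∈ Metric.sphere 0 1
  rw [mem_sphere_zero_iff_norm, EuclideanSpace.norm_eq, Real.sqrt_eq_one]
  simp only [rot, WithLp.equiv_symm_apply, PiLp.toLp_apply, Fin.sum_univ_three, Real.norm_eq_abs, sq_abs]
  simp only [Matrix.cons_val_zero, Matrix.cons_val_one, Matrix.head_cons, Matrix.cons_val_two,
    Matrix.tail_cons]
  nlinarith [hz', hx']

/-- Gluck's twist map `g(x, z) = (R(z)·x, z)` of `S² × S¹`. -/
noncomputable def gluckTwist : ↥S2 × ↥S1 → ↥S2 × ↥S1 := fun p =>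
  (⟨rot p.2 p.1, rot_mem_sphere p.2.2 p.1.2⟩, p.2)

lemma continuous_gluckTwist : Continuous gluckTwist := by
  refine Continuous.prodMk (Continuous.subtype_mk ?_ _) continuous_snd
  refine (PiLp.continuous_toLp 2 (fun _ : Fin 3 => ℝ)).comp ?_
  refine continuous_pi fun i => ?_
  have h0 : Continuous fun p : ↥S2 × ↥S1 => (p.1 : EuclideanSpace ℝ (Fin 3)) :=
    continuous_subtype_val.comp continuous_fst
  have hx : ∀ j : Fin 3, Continuous fun p : ↥S2 × ↥S1 => (p.1 : EuclideanSpace ℝ (Fin 3)) j :=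
    fun j => (continuous_apply j).comp ((PiLp.continuous_ofLp 2 (fun _ : Fin 3 => ℝ)).comp h0)
  have hre : Continuous fun p : ↥S2 × ↥S1 => (p.2 : ℂ).re :=
    Complex.continuous_re.comp (continuous_subtype_val.comp continuous_snd)
  have him : Continuous fun p : ↥S2 × ↥S1 => (p.2 : ℂ).im :=
    Complex.continuous_im.comp (continuous_subtype_val.comp continuous_snd)
  fin_cases i <;> simp [rot] <;> fun_prop

/-- Gluck's twist, as a map in the category of topological spaces. -/
noncomputable def gHom : TopCat.of (↥S2 × ↥S1) ⟶ TopCat.of (↥S2 × ↥S1) :=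
  TopCat.ofHom ⟨gluckTwist, continuous_gluckTwist⟩

/-- The boundary inclusion `S² × S¹ → B³ × S¹` induced by `S² = ∂B³ ⊆ B³`. -/
noncomputable def j1 : TopCat.of (↥S2 × ↥S1) ⟶ TopCat.of (↥B3 × ↥S1) :=
  TopCat.ofHom ⟨fun p => (⟨p.1.1, Metric.sphere_subset_closedBall p.1.2⟩, p.2), by continuity⟩

/-- The boundary inclusion `S² × S¹ → S² × D²` induced by `S¹ = ∂D² ⊆ D²`. -/
noncomputable def j2 : TopCat.of (↥S2 × ↥S1) ⟶ TopCat.of (↥S2 × ↥D2) :=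
  TopCat.ofHom ⟨fun p => (p.1, ⟨p.2.1, Metric.sphere_subset_closedBall p.2.2⟩), by continuity⟩

/-!
The Gluck twist extends over `B³ × S¹` to the full twist `τ(x, z) = (R(z)·x, z)`, a
self-homeomorphism with `τ ∘ j₁ = j₁ ∘ g`, so the pushout of `(j₁ ∘ g, j₂)` is isomorphic to the
untwisted pushout of `(j₁, j₂)`. That one is `∂(B³ × D²) = B³ × S¹ ∪ S² × D²`, the unit sphere
of `ℝ³ × ℂ` for the sup norm: the gluing map onto it is a continuous bijection from a compact space
to a Hausdorff one. Radial projection along any linear isomorphism `ℝ³ × ℂ ≅ ℝ⁵` carries this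
sphere onto `S⁴`.
-/

open Function

noncomputable def pushoutIsoOfCompIso {C : Type*} [Category C] [HasPushouts C] {X Y Y' Z : C}
    {f : X ⟶ Y} {f' : X ⟶ Y'} (e : Y ≅ Y') (h : f ≫ e.hom = f') (g : X ⟶ Z) :
    pushout f' g ≅ pushout f g :=
  asIso (pushout.map f' g f g e.inv (𝟙 _) (𝟙 _) (by simp [← h]) (by simp))

namespace TopCat

variable {X Y Z : TopCat} (f : Z ⟶ X) (g : Z ⟶ Y)

theorem pushout_inl_or_inr (a : ↑(pushout f g)) :
    (∃ x, pushout.inl f g x = a) ∨ ∃ y, pushout.inr f g y = a :=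
  Types.eq_or_eq_of_isPushout ((IsPushout.of_hasPushout f g).map (forget TopCat)) a

theorem range_pushout_inl_union_range_inr :
    Set.range (pushout.inl f g) ∪ Set.range (pushout.inr f g) = Set.univ :=
  Set.eq_univ_of_forall fun a => pushout_inl_or_inr f g a

instance [CompactSpace X] [CompactSpace Y] : CompactSpace ↑(pushout f g) where
  isCompact_univ := range_pushout_inl_union_range_inr f g ▸
    (isCompact_range (pushout.inl f g).hom.continuous).union
      (isCompact_range (pushout.inr f g).hom.continuous)

variable {T : TopCat} {k₁ : X ⟶ T} {k₂ : Y ⟶ T}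

theorem bijective_pushout_desc (hk : f ≫ k₁ = g ≫ k₂) (hk₁ : Injective k₁)
    (hk₂ : Injective k₂) (hglue : ∀ x y, k₁ x = k₂ y → ∃ z, f z = x ∧ g z = y)
    (hcover : ∀ t, (∃ x, k₁ x = t) ∨ ∃ y, k₂ y = t) :
    Bijective (pushout.desc k₁ k₂ hk) := by
  have hF₁ (x : X) : pushout.desc k₁ k₂ hk (pushout.inl f g x) = k₁ x :=
    ConcreteCategory.congr_hom (pushout.inl_desc _ _ _) x
  have hF₂ (y : Y) : pushout.desc k₁ k₂ hk (pushout.inr f g y) = k₂ y :=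
    ConcreteCategory.congr_hom (pushout.inr_desc _ _ _) y
  have hcond (z : Z) : pushout.inl f g (f z) = pushout.inr f g (g z) :=
    ConcreteCategory.congr_hom pushout.condition z
  constructor
  · intro a b hab
    rcases pushout_inl_or_inr f g a with ⟨x, rfl⟩ | ⟨y, rfl⟩ <;>
      rcases pushout_inl_or_inr f g b with ⟨x', rfl⟩ | ⟨y', rfl⟩ <;>
      simp only [hF₁, hF₂] at hab
    · rw [hk₁ hab]
    · obtain ⟨z, rfl, rfl⟩ := hglue _ _ hab
      exact hcond z
    · obtain ⟨z, rfl, rfl⟩ := hglue _ _ hab.symm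
      exact (hcond z).symm
    · rw [hk₂ hab]
  · intro t
    rcases hcover t with ⟨x, rfl⟩ | ⟨y, rfl⟩
    · exact ⟨_, hF₁ x⟩
    · exact ⟨_, hF₂ y⟩

noncomputable def pushoutHomeomorphOfGlue [CompactSpace X] [CompactSpace Y] [T2Space T]
    (hk : f ≫ k₁ = g ≫ k₂) (hk₁ : Injective k₁) (hk₂ : Injective k₂)
    (hglue : ∀ x y, k₁ x = k₂ y → ∃ z, f z = x ∧ g z = y)
    (hcover : ∀ t, (∃ x, k₁ x = t) ∨ ∃ y, k₂ y = t) :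
    ↑(pushout f g) ≃ₜ T :=
  (pushout.desc k₁ k₂ hk).hom.continuous.homeoOfEquivCompactToT2
    (f := Equiv.ofBijective _ (bijective_pushout_desc f g hk hk₁ hk₂ hglue hcover))

end TopCat

namespace ContinuousLinearEquiv

variable {E F : Type*} [NormedAddCommGroup E] [NormedSpace ℝ E] [NormedAddCommGroup F]
  [NormedSpace ℝ F] (e : E ≃L[ℝ] F)

noncomputable def sphereRadialMap : C(Metric.sphere (0 : E) 1, Metric.sphere (0 : F) 1) where
  toFun x := ⟨‖e x‖⁻¹ • e x, by
    have hx : e x ≠ 0 := e.map_ne_zero_iff.mpr (ne_zero_of_mem_unit_sphere x)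
    simp [norm_smul, hx]⟩
  continuous_toFun := by
    refine Continuous.subtype_mk (Continuous.smul ?_ (by fun_prop)) _
    exact (by fun_prop : Continuous fun x : Metric.sphere (0 : E) 1 => ‖e x‖).inv₀
      fun x => norm_ne_zero_iff.mpr (e.map_ne_zero_iff.mpr (ne_zero_of_mem_unit_sphere x))

theorem sphereRadialMap_symm_apply_sphereRadialMap (x : Metric.sphere (0 : E) 1) :
    e.symm.sphereRadialMap (e.sphereRadialMap x) = x := by
  have hx : 0 < ‖e x‖ := norm_pos_iff.mpr (e.map_ne_zero_iff.mpr (ne_zero_of_mem_unit_sphere x))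
  ext1
  simp [sphereRadialMap, norm_smul, hx.ne']

noncomputable def unitSphereHomeomorph : Metric.sphere (0 : E) 1 ≃ₜ Metric.sphere (0 : F) 1 where
  toFun := e.sphereRadialMap
  invFun := e.symm.sphereRadialMap
  left_inv := e.sphereRadialMap_symm_apply_sphereRadialMap
  right_inv := e.symm.sphereRadialMap_symm_apply_sphereRadialMap
  continuous_toFun := e.sphereRadialMap.continuous
  continuous_invFun := e.symm.sphereRadialMap.continuous

end ContinuousLinearEquiv

theorem rot_rot (z w : ℂ) (x : EuclideanSpace ℝ (Fin 3)) : rot z (rot w x) = rot (z * w) x := by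
  ext i
  fin_cases i <;> simp [rot, Complex.mul_re, Complex.mul_im] <;> ring

theorem rot_one (x : EuclideanSpace ℝ (Fin 3)) : rot 1 x = x := by
  ext i
  fin_cases i <;> simp [rot]

theorem norm_rot {z : ℂ} (hz : z ∈ S1) (x : EuclideanSpace ℝ (Fin 3)) : ‖rot z x‖ = ‖x‖ := by
  have hz' := norm_sq_eq_one_of_mem_S1 hz
  simp only [EuclideanSpace.norm_eq, Fin.sum_univ_three, Real.norm_eq_abs, sq_abs]
  congr 1
  simp only [rot, WithLp.equiv_symm_apply, PiLp.toLp_apply, Matrix.cons_val_zero,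
    Matrix.cons_val_one, Matrix.cons_val_two, Matrix.head_cons, Matrix.tail_cons]
  linear_combination (x 0 ^ 2 + x 1 ^ 2) * hz'

@[fun_prop]
theorem Continuous.rot {X : Type*} [TopologicalSpace X] {f : X → ℂ}
    {g : X → EuclideanSpace ℝ (Fin 3)} (hf : Continuous f) (hg : Continuous g) :
    Continuous fun a => rot (f a) (g a) := by
  refine (PiLp.continuous_toLp 2 _).comp (continuous_pi fun i => ?_)
  fin_cases i <;> simp <;> fun_prop

theorem rot_conj_rot {z : ℂ} (hz : z ∈ S1) (x : EuclideanSpace ℝ (Fin 3)) :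
    rot (starRingEnd ℂ z) (rot z x) = x := by
  rw [rot_rot, ← Complex.normSq_eq_conj_mul_self, Complex.normSq_eq_norm_sq,
    mem_sphere_zero_iff_norm.mp hz]
  simp [rot_one]

theorem conj_mem_S1 {z : ℂ} (hz : z ∈ S1) : starRingEnd ℂ z ∈ S1 := by
  simpa [S1] using hz

theorem rot_mem_B3 {z : ℂ} (hz : z ∈ S1) {x : EuclideanSpace ℝ (Fin 3)} (hx : x ∈ B3) :
    rot z x ∈ B3 := by
  simpa [B3, norm_rot hz] using hx

noncomputable def fullTwist : ↥B3 × ↥S1 ≃ₜ ↥B3 × ↥S1 where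
  toFun p := (⟨rot p.2 p.1, rot_mem_B3 p.2.2 p.1.2⟩, p.2)
  invFun p := (⟨rot (starRingEnd ℂ p.2) p.1, rot_mem_B3 (conj_mem_S1 p.2.2) p.1.2⟩, p.2)
  left_inv p := by ext1 <;> simp [rot_conj_rot p.2.2]
  right_inv p := by
    ext1
    · exact Subtype.ext (by simpa using rot_conj_rot (conj_mem_S1 p.2.2) p.1)
    · rfl
  continuous_toFun := by fun_prop
  continuous_invFun := by fun_prop

theorem j1_comp_fullTwist : j1 ≫ (TopCat.isoOfHomeo fullTwist).hom = gHom ≫ j1 := rfl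

instance : CompactSpace ↥B3 := isCompact_iff_compactSpace.mp (isCompact_closedBall 0 1)
instance : CompactSpace ↥S2 := isCompact_iff_compactSpace.mp (isCompact_sphere 0 1)
instance : CompactSpace ↥D2 := isCompact_iff_compactSpace.mp (isCompact_closedBall 0 1)
instance : CompactSpace ↥S1 := isCompact_iff_compactSpace.mp (isCompact_sphere 0 1)

noncomputable def pushoutJ1J2Homeomorph :
    ↑(pushout j1 j2) ≃ₜ Metric.sphere (0 : EuclideanSpace ℝ (Fin 3) × ℂ) 1 :=
  TopCat.pushoutHomeomorphOfGlue (T := TopCat.of (Metric.sphere _ 1)) j1 j2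
    (k₁ := TopCat.ofHom ⟨fun p => ⟨(p.1.1, p.2.1), by
      rw [sphere_prod]; exact Or.inr ⟨p.1.2, p.2.2⟩⟩, by fun_prop⟩)
    (k₂ := TopCat.ofHom ⟨fun p => ⟨(p.1.1, p.2.1), by
      rw [sphere_prod]; exact Or.inl ⟨p.1.2, p.2.2⟩⟩, by fun_prop⟩)
    rfl
    (fun p q h => by simpa [Prod.ext_iff, Subtype.ext_iff] using h)
    (fun p q h => by simpa [Prod.ext_iff, Subtype.ext_iff] using h)
    (fun ⟨x, z⟩ ⟨x', w⟩ h => by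
      obtain ⟨hx, hz⟩ := Prod.mk.inj (congrArg Subtype.val h)
      exact ⟨(x', z), Prod.ext (Subtype.ext hx.symm) rfl, Prod.ext rfl (Subtype.ext hz)⟩)
    (fun t => by
      rcases (sphere_prod _ _).subset t.2 with ⟨hx, hw⟩ | ⟨hx, hz⟩
      · exact Or.inr ⟨(⟨_, hx⟩, ⟨_, hw⟩), rfl⟩
      · exact Or.inl ⟨(⟨_, hx⟩, ⟨_, hz⟩), rfl⟩)

/-- Re-gluing the standard decomposition of `S⁴` by the Gluck twist of
`S² × S¹` again yields a space homeomorphic to the 4-sphere: the pushout of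
`(j₁ ∘ g, j₂)` is homeomorphic to `S⁴`. -/
theorem gluck_reglued_sphere4 :
    Nonempty ((pushout (gHom ≫ j1) j2 : TopCat) ≃ₜ ↥S4) :=
  ⟨(TopCat.homeoOfIso (pushoutIsoOfCompIso _ j1_comp_fullTwist j2)).trans <|
    pushoutJ1J2Homeomorph.trans <|
      (ContinuousLinearEquiv.ofFinrankEq (by simp [Module.finrank_prod])).unitSphereHomeomorph⟩
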